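/- arXiv:2209.02013 — 3 statements merged into one kernel-verified Lean document; each statement's English description precedes it below -/
import Mathlib

section
/- Let P_n ⊆ [0,1)^s with n = b^m points and k ∈ ℕ^s with |k| ≤ m. Then P_n is k-equidistributed in base b if and only if C_b(k; P_n) = b^{|k|}(b^{m-|k|} - 1)/(b^m - 1), where C_b(k; P_n) = b^{|k|} M_b(k; P_n) / (n(n-1)). -/
/-- `M_b(k; P_n)`: the number of ordered pairs of distinct points lying in a common
elementary `k`-interval. -/
noncomputable def Mcount (b : ℕ) {s n : ℕ} (k : Fin s → ℕ) (U : Fin n → Fin s → ℝ) : ℕ :=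
  ((Finset.univ : Finset (Fin n × Fin n)).filter (fun p => p.1 ≠ p.2 ∧
    ∀ ℓ, ⌊(b:ℝ)^(k ℓ) * U p.1 ℓ⌋ = ⌊(b:ℝ)^(k ℓ) * U p.2 ℓ⌋)).card

/-- `C_b(k; P_n) = b^{|k|} M_b(k; P_n) / (n(n-1))`. -/
noncomputable def Cval (b : ℕ) {s n : ℕ} (k : Fin s → ℕ) (U : Fin n → Fin s → ℝ) : ℝ :=
  (b:ℝ)^(∑ ℓ, k ℓ) * (Mcount b k U) / ((n:ℝ) * ((n:ℝ) - 1))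

/-!
Sort the points into the `b^{|k|}` elementary `k`-intervals and let `N_a` be the number of points
in the interval `a`. Ordered pairs of points sharing an interval, diagonal included, number
`∑ N_a²`, so `M_b(k; P_n) = ∑ N_a² - n`. Since `∑ N_a = n = b^{|k|} E` with `E = b^{m-|k|}`,
`∑ (N_a - E)² = ∑ N_a² - b^{|k|} E²`, hence `∑ N_a² ≥ b^{|k|} E² = n E` with equality exactly when
every `N_a = E`. The stated value of `C_b` is `M_b = n (E - 1)` rewritten.
-/

open Finset

lemma sum_sq_eq_card_mul_sq_iff {α : Type*} {t : Finset α} {N : α → ℕ} {E : ℕ}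
    (hsum : ∑ a ∈ t, N a = #t * E) :
    ∑ a ∈ t, N a ^ 2 = #t * E ^ 2 ↔ ∀ a ∈ t, N a = E := by
  have hvar : ∑ a ∈ t, ((N a : ℤ) - E) ^ 2 = ∑ a ∈ t, (N a : ℤ) ^ 2 - #t * (E : ℤ) ^ 2 := by
    have hsumℤ : ∑ a ∈ t, (N a : ℤ) = #t * E := by exact_mod_cast hsum
    simp only [sub_sq, sum_add_distrib, sum_sub_distrib, ← sum_mul, ← mul_sum, hsumℤ,
      sum_const, nsmul_eq_mul]
    ring
  constructor
  · intro h a ha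
    have hzero : ∑ a ∈ t, ((N a : ℤ) - E) ^ 2 = 0 := by
      rw [hvar, sub_eq_zero]
      exact_mod_cast h
    have := (sum_eq_zero_iff_of_nonneg fun a _ => sq_nonneg ((N a : ℤ) - E)).1 hzero a ha
    exact_mod_cast sub_eq_zero.1 (pow_eq_zero_iff two_ne_zero |>.1 this)
  · intro h
    rw [sum_congr rfl fun a ha => by rw [h a ha], sum_const, smul_eq_mul]

section Collisions

variable {ι α : Type*} [Fintype ι] [DecidableEq ι] [DecidableEq α]

def collisionCount (f : ι → α) : ℕ :=
  #{p : ι × ι | p.1 ≠ p.2 ∧ f p.1 = f p.2}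

lemma collisionCount_add_card_eq_sum_sq (f : ι → α) {t : Finset α} (hf : ∀ i, f i ∈ t) :
    collisionCount f + Fintype.card ι = ∑ a ∈ t, #{i | f i = a} ^ 2 := by
  have hsame : #{p : ι × ι | f p.1 = f p.2} = ∑ a ∈ t, #{i | f i = a} ^ 2 := by
    rw [card_eq_sum_card_fiberwise (f := fun p => f p.1) (t := t) fun p _ => hf p.1]
    refine sum_congr rfl fun a _ => ?_
    rw [sq, ← card_product]
    congr 1
    ext p
    simp only [mem_filter, mem_univ, true_and, mem_product]
    constructor
    · rintro ⟨h, rfl⟩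
      exact ⟨rfl, h.symm⟩
    · rintro ⟨h1, h2⟩
      exact ⟨h1.trans h2.symm, h1⟩
  have hdiag : #{p : ι × ι | f p.1 = f p.2 ∧ p.1 = p.2} = Fintype.card ι := by
    rw [← card_univ, ← diag_card (univ : Finset ι)]
    congr 1
    ext p
    simp only [mem_filter, mem_univ, true_and, mem_diag]
    exact ⟨And.right, fun h => ⟨congrArg f h, h⟩⟩
  rw [← hsame, ← hdiag, collisionCount, ← card_union_of_disjoint]
  · congr 1
    ext p
    simp only [mem_union, mem_filter, mem_univ, true_and]
    tauto
  · exact disjoint_filter.2 fun p _ h1 h2 => h1.1 h2.2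

lemma collisionCount_eq_iff_forall_card_fiber_eq (f : ι → α) {t : Finset α} (hf : ∀ i, f i ∈ t) {E : ℕ}
    (hcard : Fintype.card ι = #t * E) :
    collisionCount f = Fintype.card ι * (E - 1) ↔ ∀ a ∈ t, #{i | f i = a} = E := by
  have hsum : ∑ a ∈ t, #{i | f i = a} = #t * E := by
    rw [← hcard, ← card_univ, card_eq_sum_card_fiberwise fun i _ => hf i]
  rw [← sum_sq_eq_card_mul_sq_iff hsum, ← collisionCount_add_card_eq_sum_sq f hf]
  rcases E with _ | E
  · simp_all
  · have h : #t * (E + 1) ^ 2 = Fintype.card ι * E + Fintype.card ι := by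
      rw [hcard]; ring
    rw [h, Nat.add_sub_cancel]
    omega

end Collisions

lemma natFloor_mul_eq_iff_mem_Ico {c x : ℝ} (hc : 0 < c) (hx : 0 ≤ x) (a : ℕ) :
    ⌊c * x⌋₊ = a ↔ x ∈ Set.Ico (a / c) ((a + 1) / c) := by
  rw [Nat.floor_eq_iff (by positivity), Set.mem_Ico, div_le_iff₀ hc, lt_div_iff₀ hc, mul_comm x]

noncomputable def cell (b : ℕ) {s : ℕ} (k : Fin s → ℕ) (x : Fin s → ℝ) : Fin s → ℕ :=
  fun ℓ => ⌊(b : ℝ) ^ k ℓ * x ℓ⌋₊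

section Cells

variable {b s : ℕ} (k : Fin s → ℕ)

lemma cell_mem_piFinset (hb : 0 < b) {x : Fin s → ℝ} (hx : ∀ ℓ, x ℓ ∈ Set.Ico 0 1) :
    cell b k x ∈ Fintype.piFinset fun ℓ => range (b ^ k ℓ) := by
  simp only [Fintype.mem_piFinset, mem_range, cell]
  intro ℓ
  have hbk : (0 : ℝ) < (b : ℝ) ^ k ℓ := by positivity
  rw [Nat.floor_lt (mul_nonneg hbk.le (hx ℓ).1), Nat.cast_pow]
  exact mul_lt_of_lt_one_right hbk (hx ℓ).2

lemma cell_eq_iff (hb : 0 < b) {x : Fin s → ℝ} (hx : ∀ ℓ, 0 ≤ x ℓ) (a : Fin s → ℕ) :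
    cell b k x = a ↔
      ∀ ℓ, x ℓ ∈ Set.Ico ((a ℓ : ℝ) / (b : ℝ) ^ k ℓ) (((a ℓ : ℝ) + 1) / (b : ℝ) ^ k ℓ) := by
  simp only [funext_iff, cell]
  exact forall_congr' fun ℓ => natFloor_mul_eq_iff_mem_Ico (by positivity) (hx ℓ) (a ℓ)

lemma Mcount_eq_collisionCount {n : ℕ} {U : Fin n → Fin s → ℝ} (hU : ∀ i ℓ, 0 ≤ U i ℓ) :
    Mcount b k U = collisionCount fun i => cell b k (U i) := by
  unfold Mcount collisionCount
  congr 1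
  ext p
  simp only [mem_filter, mem_univ, true_and, funext_iff, cell]
  refine and_congr_right fun _ => forall_congr' fun ℓ => ?_
  rw [← Int.natCast_floor_eq_floor (mul_nonneg (by positivity) (hU p.1 ℓ)),
    ← Int.natCast_floor_eq_floor (mul_nonneg (by positivity) (hU p.2 ℓ)), Nat.cast_inj]

end Cells

lemma Cval_eq_iff_Mcount_eq {b s n : ℕ} (hb : 0 < b) (hn : 2 ≤ n) (k : Fin s → ℕ)
    (U : Fin n → Fin s → ℝ) (E : ℝ) :
    Cval b k U = (b : ℝ) ^ (∑ ℓ, k ℓ) * (E - 1) / (n - 1) ↔ (Mcount b k U : ℝ) = n * (E - 1) := by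
  have hn' : (2 : ℝ) ≤ n := by exact_mod_cast hn
  have hscale : (b : ℝ) ^ (∑ ℓ, k ℓ) * (n - 1) ≠ 0 := by
    have : (0 : ℝ) < n - 1 := by linarith
    positivity
  rw [Cval, div_eq_div_iff (by nlinarith) (by linarith)]
  constructor
  · intro h
    apply mul_left_cancel₀ hscale
    linear_combination h
  · intro h
    linear_combination (b : ℝ) ^ (∑ ℓ, k ℓ) * (n - 1) * h

open scoped Classical in
/-- A set of `n = b^m` points in `[0,1)^s` with `|k| ≤ m` is `k`-equidistributed iff
`C_b(k; P_n) = b^{|k|}(b^{m-|k|} - 1)/(b^m - 1)`. -/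
theorem stmt5 (b s m : ℕ) (hb : 2 ≤ b) (hm : 1 ≤ m) (k : Fin s → ℕ)
    (hk : ∑ ℓ, k ℓ ≤ m)
    (U : Fin (b^m) → Fin s → ℝ) (hU : ∀ i ℓ, U i ℓ ∈ Set.Ico (0:ℝ) 1) :
    (∀ a : Fin s → ℕ, (∀ ℓ, a ℓ < b ^ k ℓ) →
      (Finset.univ.filter (fun i : Fin (b^m) => ∀ ℓ, U i ℓ ∈
        Set.Ico ((a ℓ : ℝ)/(b:ℝ)^(k ℓ)) (((a ℓ : ℝ)+1)/(b:ℝ)^(k ℓ)))).card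
        = b ^ (m - ∑ ℓ, k ℓ)) ↔
      Cval b k U = (b:ℝ)^(∑ ℓ, k ℓ) * ((b:ℝ)^(m - ∑ ℓ, k ℓ) - 1) / ((b:ℝ)^m - 1) := by
  have hb0 : 0 < b := by omega
  have hn : 2 ≤ b ^ m := hb.trans (Nat.le_self_pow (by omega) b)
  have hU0 : ∀ i ℓ, 0 ≤ U i ℓ := fun i ℓ => (hU i ℓ).1
  have hcard : Fintype.card (Fin (b ^ m)) =
      #(Fintype.piFinset fun ℓ => range (b ^ k ℓ)) * b ^ (m - ∑ ℓ, k ℓ) := by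
    rw [Fintype.card_fin, Fintype.card_piFinset]
    simp only [card_range, prod_pow_eq_pow_sum, ← pow_add, Nat.add_sub_cancel' hk]
  have hequi := collisionCount_eq_iff_forall_card_fiber_eq _ (fun i => cell_mem_piFinset k hb0 (hU i)) hcard
  rw [Fintype.card_fin] at hequi
  have hE : 1 ≤ b ^ (m - ∑ ℓ, k ℓ) := Nat.one_le_pow _ _ hb0
  rw [← Nat.cast_pow b m, ← Nat.cast_pow b (m - _), Cval_eq_iff_Mcount_eq hb0 hn, ← Nat.cast_pred hE,
    ← Nat.cast_mul, Nat.cast_inj, Mcount_eq_collisionCount k hU0, hequi]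
  simp only [Fintype.mem_piFinset, mem_range, ← cell_eq_iff k hb0 (hU0 _)]
end

section
/- If P_n is a (0,m,s)-net in base b (n = b^m), then for every k ∈ ℕ^s, C_b(k; P_n) = b^{|k|} · max(b^{m-|k|} - 1, 0) / (b^m - 1). In particular C_b(k; P_n) ≤ 1 for all k, i.e., P_n is completely quasi-equidistributed in base b. -/
open Finset

theorem Fintype.exists_le_sum_eq {ι : Type*} [Fintype ι] [DecidableEq ι] (f : ι → ℕ) {m : ℕ}
    (h : m ≤ ∑ i, f i) : ∃ g ≤ f, ∑ i, g i = m := by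
  obtain ⟨t, ht, rfl⟩ := exists_subset_card_eq (s := univ.sigma fun i => range (f i))
    (by simpa using h)
  refine ⟨fun i => #{x ∈ t | x.1 = i}, fun i => ?_,
    (card_eq_sum_card_fiberwise fun x _ => mem_univ x.1).symm⟩
  calc #{x ∈ t | x.1 = i} ≤ #(range (f i)) := by
        refine card_le_card_of_injOn Sigma.snd (fun x hx => ?_) (fun x hx y hy hxy => ?_)
        · obtain ⟨hxt, rfl⟩ := mem_filter.mp hx
          exact (mem_sigma.mp (ht hxt)).2
        · simp only [coe_filter] at hx hy
          exact Sigma.ext (hx.2.trans hy.2.symm) (heq_of_eq hxy)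
    _ = f i := Finset.card_range _

theorem Finset.card_filter_ne_and_eq_of_card_fiber {ι β : Type*} [Fintype ι] [DecidableEq ι]
    [DecidableEq β] (f : ι → β) (t : Finset β) (hf : ∀ i, f i ∈ t) (c : ℕ)
    (hc : ∀ a ∈ t, #{i | f i = a} = c) :
    #{p : ι × ι | p.1 ≠ p.2 ∧ f p.1 = f p.2} = #t * (c * (c - 1)) := by
  rw [card_eq_sum_card_fiberwise (f := fun p => f p.1) fun p _ => hf p.1, ← smul_eq_mul,
    ← sum_const]
  refine sum_congr rfl fun a ha => ?_
  have hfiber : filter (fun p : ι × ι => f p.1 = a) {p : ι × ι | p.1 ≠ p.2 ∧ f p.1 = f p.2} =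
      (filter (fun i => f i = a) univ).offDiag := by
    ext ⟨i, j⟩
    simp only [mem_filter, mem_univ, true_and, mem_offDiag]
    constructor
    · rintro ⟨⟨hij, hfij⟩, rfl⟩
      exact ⟨rfl, hfij.symm, hij⟩
    · rintro ⟨rfl, hj, hij⟩
      exact ⟨⟨hij, hj.symm⟩, rfl⟩
  rw [hfiber, offDiag_card, hc a ha, Nat.mul_sub_one]

section CellIndex

variable {ι : Type*} {b : ℕ}

noncomputable def cellIndex (b : ℕ) (k : ι → ℕ) (u : ι → ℝ) : ι → ℕ :=
  fun ℓ => ⌊(b : ℝ) ^ k ℓ * u ℓ⌋₊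

theorem cellIndex_lt {k : ι → ℕ} {u : ι → ℝ} (hb : 0 < b) (hu : ∀ ℓ, u ℓ ∈ Set.Ico 0 1)
    (ℓ : ι) : cellIndex b k u ℓ < b ^ k ℓ := by
  have hbk : (0 : ℝ) < (b : ℝ) ^ k ℓ := by positivity
  rw [cellIndex, Nat.floor_lt (mul_nonneg hbk.le (hu ℓ).1), Nat.cast_pow]
  exact mul_lt_of_lt_one_right hbk (hu ℓ).2

theorem cellIndex_eq_iff {k : ι → ℕ} {u : ι → ℝ} (hb : 0 < b) (hu : ∀ ℓ, 0 ≤ u ℓ)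
    (a : ι → ℕ) :
    cellIndex b k u = a ↔
      ∀ ℓ, u ℓ ∈ Set.Ico ((a ℓ : ℝ) / (b : ℝ) ^ k ℓ) (((a ℓ : ℝ) + 1) / (b : ℝ) ^ k ℓ) := by
  refine funext_iff.trans (forall_congr' fun ℓ => ?_)
  have hbk : (0 : ℝ) < (b : ℝ) ^ k ℓ := by positivity
  rw [cellIndex, Nat.floor_eq_iff (mul_nonneg hbk.le (hu ℓ)), Set.mem_Ico, div_le_iff₀ hbk,
    lt_div_iff₀ hbk, mul_comm (u ℓ)]

theorem cellIndex_eq_cellIndex_iff {k : ι → ℕ} {u v : ι → ℝ} (hu : ∀ ℓ, 0 ≤ u ℓ)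
    (hv : ∀ ℓ, 0 ≤ v ℓ) :
    cellIndex b k u = cellIndex b k v ↔
      ∀ ℓ, ⌊(b : ℝ) ^ k ℓ * u ℓ⌋ = ⌊(b : ℝ) ^ k ℓ * v ℓ⌋ := by
  refine funext_iff.trans (forall_congr' fun ℓ => ?_)
  simp only [cellIndex]
  rw [← Int.natCast_floor_eq_floor (by positivity [hu ℓ]),
    ← Int.natCast_floor_eq_floor (by positivity [hv ℓ]), Nat.cast_inj]

theorem cellIndex_eq_of_le {k k' : ι → ℕ} {u v : ι → ℝ} (hb : 0 < b) (hk : k' ≤ k)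
    (h : cellIndex b k u = cellIndex b k v) : cellIndex b k' u = cellIndex b k' v := by
  have coarsen (w : ι → ℝ) :
      cellIndex b k' w = fun ℓ => cellIndex b k w ℓ / b ^ (k ℓ - k' ℓ) := by
    funext ℓ
    have hdiv :
        (b : ℝ) ^ k' ℓ * w ℓ = (b : ℝ) ^ k ℓ * w ℓ / ((b ^ (k ℓ - k' ℓ) : ℕ) : ℝ) := by
      rw [eq_div_iff (by positivity), Nat.cast_pow, mul_right_comm, ← pow_add,
        Nat.add_sub_cancel' (hk ℓ)]
    rw [cellIndex, hdiv, Nat.floor_div_natCast]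
    rfl
  rw [coarsen, coarsen, h]

theorem Mcount_eq_card_cellIndex {s n : ℕ} (k : Fin s → ℕ) {U : Fin n → Fin s → ℝ}
    (hU : ∀ i ℓ, 0 ≤ U i ℓ) :
    Mcount b k U =
      #{p : Fin n × Fin n | p.1 ≠ p.2 ∧ cellIndex b k (U p.1) = cellIndex b k (U p.2)} := by
  refine congrArg card (filter_congr fun p _ => ?_)
  rw [cellIndex_eq_cellIndex_iff (hU p.1) (hU p.2)]

end CellIndex

open scoped Classical in
def IsZeroNet (b m : ℕ) {s : ℕ} (U : Fin (b ^ m) → Fin s → ℝ) : Prop :=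
  ∀ k : Fin s → ℕ, ∑ ℓ, k ℓ ≤ m → ∀ a : Fin s → ℕ, (∀ ℓ, a ℓ < b ^ k ℓ) →
    #{i : Fin (b ^ m) |
        ∀ ℓ, U i ℓ ∈ Set.Ico ((a ℓ : ℝ) / (b : ℝ) ^ k ℓ) (((a ℓ : ℝ) + 1) / (b : ℝ) ^ k ℓ)} =
      b ^ (m - ∑ ℓ, k ℓ)

namespace IsZeroNet

variable {b m s : ℕ} {U : Fin (b ^ m) → Fin s → ℝ}

theorem card_cellIndex_eq (hnet : IsZeroNet b m U) (hb : 0 < b) (hU : ∀ i ℓ, 0 ≤ U i ℓ)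
    {k : Fin s → ℕ} (hk : ∑ ℓ, k ℓ ≤ m) {a : Fin s → ℕ} (ha : ∀ ℓ, a ℓ < b ^ k ℓ) :
    #{i | cellIndex b k (U i) = a} = b ^ (m - ∑ ℓ, k ℓ) := by
  classical
  rw [← hnet k hk a ha]
  exact congrArg card (filter_congr fun i _ => cellIndex_eq_iff hb (hU i) a)

theorem Mcount_eq (hnet : IsZeroNet b m U) (hb : 0 < b) (hU : ∀ i ℓ, U i ℓ ∈ Set.Ico 0 1)
    {k : Fin s → ℕ} (hk : ∑ ℓ, k ℓ ≤ m) :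
    Mcount b k U = b ^ (∑ ℓ, k ℓ) * (b ^ (m - ∑ ℓ, k ℓ) * (b ^ (m - ∑ ℓ, k ℓ) - 1)) := by
  have hU₀ i ℓ : 0 ≤ U i ℓ := (hU i ℓ).1
  let cells := Fintype.piFinset fun ℓ => range (b ^ k ℓ)
  have hmaps i : cellIndex b k (U i) ∈ cells :=
    Fintype.mem_piFinset.2 fun ℓ => mem_range.2 (cellIndex_lt hb (hU i) ℓ)
  have hfiber a (ha : a ∈ cells) : #{i | cellIndex b k (U i) = a} = b ^ (m - ∑ ℓ, k ℓ) :=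
    hnet.card_cellIndex_eq hb hU₀ hk fun ℓ => mem_range.1 (Fintype.mem_piFinset.1 ha ℓ)
  rw [Mcount_eq_card_cellIndex k hU₀, card_filter_ne_and_eq_of_card_fiber _ cells hmaps _ hfiber,
    Fintype.card_piFinset]
  simp only [card_range, prod_pow_eq_pow_sum]

theorem Mcount_eq_zero (hnet : IsZeroNet b m U) (hb : 0 < b) (hU : ∀ i ℓ, U i ℓ ∈ Set.Ico 0 1)
    {k : Fin s → ℕ} (hk : m < ∑ ℓ, k ℓ) : Mcount b k U = 0 := by
  have hU₀ i ℓ : 0 ≤ U i ℓ := (hU i ℓ).1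
  rw [Mcount_eq_card_cellIndex k hU₀, card_eq_zero, filter_eq_empty_iff]
  rintro ⟨i, j⟩ - ⟨hij, hcell⟩
  obtain ⟨k', hk', hk'm⟩ := Fintype.exists_le_sum_eq k hk.le
  have hsingle : #{i' | cellIndex b k' (U i') = cellIndex b k' (U i)} ≤ 1 := by
    rw [hnet.card_cellIndex_eq hb hU₀ hk'm.le (cellIndex_lt hb (hU i)), hk'm, Nat.sub_self,
      pow_zero]
  exact hij (card_le_one.1 hsingle i (by simp) j
    (by simpa using (cellIndex_eq_of_le hb hk' hcell).symm))

theorem Cval_eq (hnet : IsZeroNet b m U) (hb : 0 < b) (hU : ∀ i ℓ, U i ℓ ∈ Set.Ico 0 1)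
    {k : Fin s → ℕ} (hk : ∑ ℓ, k ℓ ≤ m) :
    Cval b k U = (b : ℝ) ^ (∑ ℓ, k ℓ) * ((b : ℝ) ^ (m - ∑ ℓ, k ℓ) - 1) / ((b : ℝ) ^ m - 1) := by
  set x := (b : ℝ) ^ (∑ ℓ, k ℓ)
  set y := (b : ℝ) ^ (m - ∑ ℓ, k ℓ)
  have hn : (b : ℝ) ^ m = x * y := by rw [← pow_add, Nat.add_sub_cancel' hk]
  have hxy : x * y ≠ 0 := by positivity
  rw [Cval, hnet.Mcount_eq hb hU hk, Nat.cast_pow, hn]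
  push_cast [Nat.cast_sub (Nat.one_le_pow _ _ hb)]
  rw [show x * (x * (y * (y - 1))) = x * y * (x * (y - 1)) by ring, mul_div_mul_left _ _ hxy]

theorem Cval_eq_zero (hnet : IsZeroNet b m U) (hb : 0 < b) (hU : ∀ i ℓ, U i ℓ ∈ Set.Ico 0 1)
    {k : Fin s → ℕ} (hk : m < ∑ ℓ, k ℓ) : Cval b k U = 0 := by
  rw [Cval, hnet.Mcount_eq_zero hb hU hk, Nat.cast_zero, mul_zero, zero_div]

end IsZeroNet

open scoped Classical in
theorem stmt6_general (b s m : ℕ) (hb : 2 ≤ b)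
    (U : Fin (b^m) → Fin s → ℝ) (hU : ∀ i ℓ, U i ℓ ∈ Set.Ico (0:ℝ) 1)
    (hnet : ∀ k : Fin s → ℕ, ∑ ℓ, k ℓ ≤ m → ∀ a : Fin s → ℕ, (∀ ℓ, a ℓ < b ^ k ℓ) →
      (Finset.univ.filter (fun i : Fin (b^m) => ∀ ℓ, U i ℓ ∈
        Set.Ico ((a ℓ : ℝ)/(b:ℝ)^(k ℓ)) (((a ℓ : ℝ)+1)/(b:ℝ)^(k ℓ)))).card
        = b ^ (m - ∑ ℓ, k ℓ)) :
    ∀ k : Fin s → ℕ,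
      Cval b k U =
        (b:ℝ)^(∑ ℓ, k ℓ) * max ((b:ℝ)^((m:ℤ) - (∑ ℓ, k ℓ : ℤ)) - 1) 0 / ((b:ℝ)^m - 1) ∧
      Cval b k U ≤ 1 := by
  intro k
  have hnet : IsZeroNet b m U := hnet
  have hb₀ : 0 < b := by omega
  have hb₁ : (1 : ℝ) ≤ b := by exact_mod_cast hb₀
  have hsum : (∑ ℓ, k ℓ : ℤ) = ((∑ ℓ, k ℓ : ℕ) : ℤ) := by push_cast; rfl
  rcases le_or_gt (∑ ℓ, k ℓ) m with hk | hk
  · have hCval := hnet.Cval_eq hb₀ hU hk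
    refine ⟨?_, ?_⟩
    · rw [hCval, hsum, ← Nat.cast_sub hk, zpow_natCast,
        max_eq_left (sub_nonneg.2 (one_le_pow₀ hb₁))]
    rw [hCval, mul_sub, mul_one, ← pow_add, Nat.add_sub_cancel' hk]
    exact div_le_one_of_le₀ (by linarith [one_le_pow₀ (n := ∑ ℓ, k ℓ) hb₁])
      (sub_nonneg.2 (one_le_pow₀ hb₁))
  · have hneg : (b : ℝ) ^ ((m : ℤ) - (∑ ℓ, k ℓ : ℤ)) ≤ 1 :=
      zpow_le_one_of_nonpos₀ hb₁ (by rw [hsum]; omega)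
    rw [hnet.Cval_eq_zero hb₀ hU hk, max_eq_right (by linarith)]
    norm_num

open scoped Classical in
/-- If `P_n` is a `(0,m,s)`-net in base `b` then for every `k`,
`C_b(k; P_n) = b^{|k|} · max(b^{m-|k|} - 1, 0) / (b^m - 1)`, and in particular
`C_b(k; P_n) ≤ 1` for all `k` (complete quasi-equidistribution). -/
theorem stmt6 (b s m : ℕ) (hb : 2 ≤ b) (hm : 1 ≤ m)
    (U : Fin (b^m) → Fin s → ℝ) (hU : ∀ i ℓ, U i ℓ ∈ Set.Ico (0:ℝ) 1)
    (hnet : ∀ k : Fin s → ℕ, ∑ ℓ, k ℓ ≤ m → ∀ a : Fin s → ℕ, (∀ ℓ, a ℓ < b ^ k ℓ) →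
      (Finset.univ.filter (fun i : Fin (b^m) => ∀ ℓ, U i ℓ ∈
        Set.Ico ((a ℓ : ℝ)/(b:ℝ)^(k ℓ)) (((a ℓ : ℝ)+1)/(b:ℝ)^(k ℓ)))).card
        = b ^ (m - ∑ ℓ, k ℓ)) :
    ∀ k : Fin s → ℕ,
      Cval b k U =
        (b:ℝ)^(∑ ℓ, k ℓ) * max ((b:ℝ)^((m:ℤ) - (∑ ℓ, k ℓ : ℤ)) - 1) 0 / ((b:ℝ)^m - 1) ∧
      Cval b k U ≤ 1 :=
  stmt6_general b s m hb U hU hnet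
end

section
/- For n consecutive points of the van der Corput sequence in base b and any k with b^k ≤ n, the one-dimensional counting number satisfies C_b(k; P_n) ≤ 1, i.e., b^k M_b(k; P_n) ≤ n(n-1), where M_b(k; P_n) counts ordered pairs of distinct points in a common interval [a/b^k, (a+1)/b^k). -/
/-!
`⌊b^k φ_b(N)⌋` is the number whose base-`b` digits are the last `k` digits of `N` in reverse
order, so two points of the sequence share an elementary interval of length `b^{-k}` iff their
indices agree mod `b^k`. A residue class mod `m` meets `n` consecutive integers in
`n_c ≤ (n - 1) / m + 1` points, hence `m n_c (n_c - 1) ≤ n_c (n - 1)`, and summing over the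
classes gives `m · #pairs ≤ n (n - 1)`.
-/

/-- The van der Corput sequence in base `b`. -/
noncomputable def vdc (b n : ℕ) : ℝ :=
  ∑ r ∈ Finset.range (Nat.digits b (n-1)).length,
    ((Nat.digits b (n-1)).getD r 0 : ℝ) / (b:ℝ)^(r+1)

open Finset

theorem Nat.add_mul_eq_add_mul_iff {B x y u v : ℕ} (hx : x < B) (hy : y < B) :
    x + B * u = y + B * v ↔ x = y ∧ u = v := by
  refine ⟨fun h => ?_, fun ⟨hxy, huv⟩ => hxy ▸ huv ▸ rfl⟩
  have hB : 0 < B := by omega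
  have hmod := congrArg (· % B) h
  have hdiv := congrArg (· / B) h
  simp only [Nat.add_mul_mod_self_left, Nat.mod_eq_of_lt hx, Nat.mod_eq_of_lt hy] at hmod
  simp only [Nat.add_mul_div_left _ _ hB, Nat.div_eq_of_lt hx, Nat.div_eq_of_lt hy] at hdiv
  omega

theorem Nat.modEq_mul_iff_mod_eq_and_div_modEq {b c M N : ℕ} (hb : 0 < b) :
    M ≡ N [MOD b * c] ↔ M % b = N % b ∧ M / b ≡ N / b [MOD c] := by
  rw [Nat.ModEq, Nat.mod_mul, Nat.mod_mul,
    Nat.add_mul_eq_add_mul_iff (Nat.mod_lt _ hb) (Nat.mod_lt _ hb), Nat.ModEq]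

theorem Finset.card_filter_ne_and_eq_eq_sum {α β : Type*} [DecidableEq α] [DecidableEq β]
    (s : Finset α) (f : α → β) :
    #{p ∈ s ×ˢ s | p.1 ≠ p.2 ∧ f p.1 = f p.2} =
      ∑ c ∈ s.image f, #{x ∈ s | f x = c} * (#{x ∈ s | f x = c} - 1) := by
  rw [card_eq_sum_card_fiberwise (f := fun p => f p.1) (t := s.image f)
    fun p hp => mem_image_of_mem f (mem_product.1 (mem_filter.1 hp).1).1]
  refine sum_congr rfl fun c _ => ?_
  rw [Nat.mul_sub_one, ← offDiag_card]
  congr 1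
  ext ⟨x, y⟩
  simp only [mem_filter, mem_product, mem_offDiag]
  constructor
  · rintro ⟨⟨⟨hx, hy⟩, hxy, hfxy⟩, rfl⟩
    exact ⟨⟨hx, rfl⟩, ⟨hy, hfxy.symm⟩, hxy⟩
  · rintro ⟨⟨hx, rfl⟩, ⟨hy, hfy⟩, hxy⟩
    exact ⟨⟨⟨hx, hy⟩, hxy, hfy.symm⟩, rfl⟩

theorem Nat.mul_card_sub_one_le_of_modEq {m a L : ℕ} {t : Finset ℕ}
    (ht : t ⊆ Icc a (a + L)) (hmod : ∀ x ∈ t, ∀ y ∈ t, x ≡ y [MOD m]) :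
    m * (#t - 1) ≤ L := by
  have hcard : #t ≤ #(range (L / m + 1)) := by
    refine card_le_card_of_injOn (fun x => (x - a) / m) (fun x hx => ?_) fun x hx y hy hxy => ?_
    · have hx' := mem_Icc.1 (ht hx)
      simpa [Nat.lt_succ_iff] using Nat.div_le_div_right (c := m) (by omega : x - a ≤ L)
    · have hx' := mem_Icc.1 (ht hx)
      have hy' := mem_Icc.1 (ht hy)
      have hres : x - a ≡ y - a [MOD m] := Nat.ModEq.add_right_cancel' a <| by
        rw [Nat.sub_add_cancel hx'.1, Nat.sub_add_cancel hy'.1]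
        exact hmod x hx y hy
      have hquot : (x - a) / m = (y - a) / m := hxy
      have : x - a = y - a :=
        calc x - a = m * ((x - a) / m) + (x - a) % m := (Nat.div_add_mod _ _).symm
          _ = m * ((y - a) / m) + (y - a) % m := by rw [hquot, hres]
          _ = y - a := Nat.div_add_mod _ _
      omega
  rw [card_range] at hcard
  calc m * (#t - 1) ≤ m * (L / m) := Nat.mul_le_mul_left m (Nat.sub_le_of_le_add hcard)
    _ ≤ L := Nat.mul_div_le L m

theorem Nat.mul_card_pairs_modEq_le {m a L : ℕ} {s : Finset ℕ}
    (hs : s ⊆ Icc a (a + L)) :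
    m * #{p ∈ s ×ˢ s | p.1 ≠ p.2 ∧ p.1 ≡ p.2 [MOD m]} ≤ #s * L := by
  have hfiber (c : ℕ) : m * (#{x ∈ s | x % m = c} - 1) ≤ L :=
    mul_card_sub_one_le_of_modEq ((filter_subset _ _).trans hs) fun x hx y hy =>
      (mem_filter.1 hx).2.trans (mem_filter.1 hy).2.symm
  calc m * #{p ∈ s ×ˢ s | p.1 ≠ p.2 ∧ p.1 ≡ p.2 [MOD m]}
      = ∑ c ∈ s.image (· % m),
          #{x ∈ s | x % m = c} * (m * (#{x ∈ s | x % m = c} - 1)) := by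
        rw [show #{p ∈ s ×ˢ s | p.1 ≠ p.2 ∧ p.1 ≡ p.2 [MOD m]} = _ from
          card_filter_ne_and_eq_eq_sum s (· % m), mul_sum]
        exact sum_congr rfl fun c _ => by ring
    _ ≤ ∑ c ∈ s.image (· % m), #{x ∈ s | x % m = c} * L :=
        sum_le_sum fun c _ => Nat.mul_le_mul_left _ (hfiber c)
    _ = #s * L := by rw [← sum_mul, ← card_eq_sum_card_image]

namespace VanDerCorput

variable {b : ℕ}

noncomputable def radicalInverse (b N : ℕ) : ℝ :=
  ∑ r ∈ range (Nat.digits b N).length, ((Nat.digits b N).getD r 0 : ℝ) / (b : ℝ) ^ (r + 1)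

theorem vdc_eq_radicalInverse (n : ℕ) : vdc b n = radicalInverse b (n - 1) := rfl

theorem radicalInverse_nonneg (N : ℕ) : 0 ≤ radicalInverse b N :=
  sum_nonneg fun _ _ => by positivity

theorem radicalInverse_eq (hb : 1 < b) (N : ℕ) :
    radicalInverse b N = ((N % b : ℕ) + radicalInverse b (N / b)) / b := by
  rcases Nat.eq_zero_or_pos N with rfl | hN
  · simp [radicalInverse]
  rw [radicalInverse, Nat.digits_def' hb hN, List.length_cons, sum_range_succ']
  simp only [List.getD_cons_succ, List.getD_cons_zero, radicalInverse, add_div, sum_div,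
    pow_succ, div_div, zero_add, pow_zero, one_mul]
  exact add_comm _ _

theorem radicalInverse_lt_one (hb : 1 < b) (N : ℕ) : radicalInverse b N < 1 := by
  induction N using Nat.strong_induction_on with
  | _ N ih =>
    rcases Nat.eq_zero_or_pos N with rfl | hN
    · simp [radicalInverse]
    have hb' : (0 : ℝ) < b := by positivity
    have hdigit : ((N % b : ℕ) : ℝ) + 1 ≤ b := by exact_mod_cast Nat.mod_lt N (by omega)
    rw [radicalInverse_eq hb, div_lt_one hb']
    linarith [ih (N / b) (Nat.div_lt_self hN hb)]

theorem floor_pow_mul_radicalInverse_lt (hb : 1 < b) (k N : ℕ) :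
    ⌊(b : ℝ) ^ k * radicalInverse b N⌋₊ < b ^ k := by
  rw [Nat.floor_lt (by positivity [radicalInverse_nonneg (b := b) N])]
  push_cast
  exact mul_lt_of_lt_one_right (by positivity) (radicalInverse_lt_one hb N)

/-- Multiplying by `b` moves the leading digit of `φ_b(N)`, which is the last digit of `N`,
in front of the radix point. -/
theorem floor_pow_succ_mul_radicalInverse (hb : 1 < b) (k N : ℕ) :
    ⌊(b : ℝ) ^ (k + 1) * radicalInverse b N⌋₊ =
      ⌊(b : ℝ) ^ k * radicalInverse b (N / b)⌋₊ + b ^ k * (N % b) := by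
  have hb' : (b : ℝ) ≠ 0 := by positivity
  have : (b : ℝ) ^ (k + 1) * radicalInverse b N =
      (b : ℝ) ^ k * radicalInverse b (N / b) + ((b ^ k * (N % b) : ℕ) : ℝ) := by
    rw [radicalInverse_eq hb]
    push_cast
    field_simp
    ring
  rw [this, Nat.floor_add_natCast (by positivity [radicalInverse_nonneg (b := b) (N / b)])]

theorem floor_pow_mul_radicalInverse_eq_iff (hb : 1 < b) (k M N : ℕ) :
    ⌊(b : ℝ) ^ k * radicalInverse b M⌋₊ = ⌊(b : ℝ) ^ k * radicalInverse b N⌋₊ ↔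
      M ≡ N [MOD b ^ k] := by
  induction k generalizing M N with
  | zero =>
    simp only [pow_zero, one_mul, Nat.modEq_one, iff_true]
    rw [Nat.floor_eq_zero.2 (radicalInverse_lt_one hb M),
      Nat.floor_eq_zero.2 (radicalInverse_lt_one hb N)]
  | succ k ih =>
    rw [floor_pow_succ_mul_radicalInverse hb, floor_pow_succ_mul_radicalInverse hb,
      Nat.add_mul_eq_add_mul_iff (floor_pow_mul_radicalInverse_lt hb _ _)
        (floor_pow_mul_radicalInverse_lt hb _ _),
      ih, pow_succ', Nat.modEq_mul_iff_mod_eq_and_div_modEq (by omega), and_comm]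

theorem floor_pow_mul_vdc_eq_iff (hb : 1 < b) (k : ℕ) {i j : ℕ} (hi : 1 ≤ i) (hj : 1 ≤ j) :
    ⌊(b : ℝ) ^ k * vdc b i⌋ = ⌊(b : ℝ) ^ k * vdc b j⌋ ↔ i ≡ j [MOD b ^ k] := by
  rw [vdc_eq_radicalInverse, vdc_eq_radicalInverse,
    ← Int.natCast_floor_eq_floor (by positivity [radicalInverse_nonneg (b := b) (i - 1)]),
    ← Int.natCast_floor_eq_floor (by positivity [radicalInverse_nonneg (b := b) (j - 1)]),
    Nat.cast_inj, floor_pow_mul_radicalInverse_eq_iff hb,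
    ← Nat.ModEq.rfl.add_iff_right (c := 1), Nat.sub_add_cancel hi, Nat.sub_add_cancel hj]

end VanDerCorput

theorem stmt18_general (b n k : ℕ) (hb : 2 ≤ b) :
    b^k * ((Finset.Icc 1 n ×ˢ Finset.Icc 1 n).filter (fun p => p.1 ≠ p.2 ∧
      ⌊(b:ℝ)^k * vdc b p.1⌋ = ⌊(b:ℝ)^k * vdc b p.2⌋)).card ≤ n * (n-1) := by
  calc _ = b ^ k * #{p ∈ Icc 1 n ×ˢ Icc 1 n | p.1 ≠ p.2 ∧ p.1 ≡ p.2 [MOD b ^ k]} := by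
        refine congrArg _ (congrArg _ (filter_congr fun p hp => ?_))
        obtain ⟨hi, hj⟩ := mem_product.1 hp
        rw [VanDerCorput.floor_pow_mul_vdc_eq_iff hb k (mem_Icc.1 hi).1 (mem_Icc.1 hj).1]
    _ ≤ #(Icc 1 n) * (n - 1) :=
        Nat.mul_card_pairs_modEq_le (a := 1) fun x hx => by simp only [mem_Icc] at hx ⊢; omega
    _ = n * (n - 1) := by rw [Nat.card_Icc, Nat.add_sub_cancel]

/-- For the first `n` points of the van der Corput sequence in base `b` and `b^k ≤ n`,
`C_b(k; P_n) ≤ 1`, i.e. `b^k M_b(k; P_n) ≤ n(n-1)`. -/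
theorem stmt18 (b n k : ℕ) (hb : 2 ≤ b) (hk : b^k ≤ n) :
    b^k * ((Finset.Icc 1 n ×ˢ Finset.Icc 1 n).filter (fun p => p.1 ≠ p.2 ∧
      ⌊(b:ℝ)^k * vdc b p.1⌋ = ⌊(b:ℝ)^k * vdc b p.2⌋)).card ≤ n * (n-1) :=
  stmt18_general b n k hb
end
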